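/- For ρ(t) = e^{−t} on [0,1], with r(t) = ρ(t)⁵ = e^{−5t}: ρ(1) + ρ'(1) = 0, ∫₀¹ (1−t²)·e^{−5t} dt = (23 + 12e^{−5})/125, ∫₀¹ t²·e^{−5t} dt = (2 − 37e^{−5})/125, and e^{−1}·(23 + 12e^{−5})/125 > 2·((2 − 37e^{−5})/125)². Consequently, with h(1) = ∫₀¹ r(t)(1−t²) dt and k(1) = ∫₀¹ t² r(t) dt, the profile ρ satisfies both the flat-top condition ρ(1)+ρ'(1) = 0 and the six-dimensional criterion 2k(1)² < h(1)·r(1). -/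

import Mathlib

open Set

lemma exp5_hasDeriv (t : ℝ) :
    HasDerivAt (fun t : ℝ => Real.exp (-5 * t)) (-5 * Real.exp (-5 * t)) t := by
  have h := (Real.hasDerivAt_exp (-5 * t)).comp t ((hasDerivAt_id t).const_mul (-5))
  simpa [Function.comp_def, mul_comm] using h

lemma int1 : (∫ t in (0 : ℝ)..1, (1 - t ^ 2) * Real.exp (-5 * t))
    = (23 + 12 * Real.exp (-5)) / 125 := by
  have key : ∀ t ∈ Set.uIcc (0:ℝ) 1,
      HasDerivAt (fun t : ℝ => (t ^ 2 / 5 + 2 * t / 25 - 23 / 125) * Real.exp (-5 * t))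
        ((1 - t ^ 2) * Real.exp (-5 * t)) t := by
    intro t _
    have h2 : HasDerivAt (fun t : ℝ => t ^ 2 / 5 + 2 * t / 25 - 23 / 125)
        (2 * t / 5 + 2 / 25) t := by
      have := (((hasDerivAt_pow 2 t).div_const 5).add
        (((hasDerivAt_id t).const_mul 2).div_const 25)).sub_const (23 / 125 : ℝ)
      refine this.congr_deriv ?_
      ring
    have := h2.mul (exp5_hasDeriv t)
    refine this.congr_deriv ?_
    ring
  rw [intervalIntegral.integral_eq_sub_of_hasDerivAt key
    (((by fun_prop : Continuous fun t : ℝ => (1 - t ^ 2) * Real.exp (-5 * t))).intervalIntegrable 0 1)]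
  norm_num
  ring

lemma int2 : (∫ t in (0 : ℝ)..1, t ^ 2 * Real.exp (-5 * t))
    = (2 - 37 * Real.exp (-5)) / 125 := by
  have key : ∀ t ∈ Set.uIcc (0:ℝ) 1,
      HasDerivAt (fun t : ℝ => -(t ^ 2 / 5 + 2 * t / 25 + 2 / 125) * Real.exp (-5 * t))
        (t ^ 2 * Real.exp (-5 * t)) t := by
    intro t _
    have h2 : HasDerivAt (fun t : ℝ => -(t ^ 2 / 5 + 2 * t / 25 + 2 / 125))
        (-(2 * t / 5 + 2 / 25)) t := by
      have := ((((hasDerivAt_pow 2 t).div_const 5).add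
        (((hasDerivAt_id t).const_mul 2).div_const 25)).add_const (2 / 125 : ℝ)).neg
      refine this.congr_deriv ?_
      ring
    have := h2.mul (exp5_hasDeriv t)
    refine this.congr_deriv ?_
    ring
  rw [intervalIntegral.integral_eq_sub_of_hasDerivAt key
    (((by fun_prop : Continuous fun t : ℝ => t ^ 2 * Real.exp (-5 * t))).intervalIntegrable 0 1)]
  norm_num
  ring

lemma deriv_exp_neg : deriv (fun t : ℝ => Real.exp (-t)) 1 = -Real.exp (-1) := by
  have h : HasDerivAt (fun t : ℝ => Real.exp (-t)) (-Real.exp (-1)) 1 := by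
    have := (Real.hasDerivAt_exp (-1)).comp 1 (hasDerivAt_neg (1 : ℝ))
    simpa [mul_comm, Function.comp_def] using this
  exact h.deriv

lemma key_ineq : Real.exp (-1) * ((23 + 12 * Real.exp (-5)) / 125) >
    2 * ((2 - 37 * Real.exp (-5)) / 125) ^ 2 := by
  have h5 : Real.exp (-5) = Real.exp (-1) ^ 5 := by
    rw [← Real.exp_nat_mul]
    norm_num
  set x := Real.exp (-1) with hx
  have hxpos : 0 < x := Real.exp_pos _
  have hmul : x * Real.exp 1 = 1 := by
    rw [hx, ← Real.exp_add]; norm_num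
  have he1 : Real.exp 1 < 2.7182818286 := Real.exp_one_lt_d9
  have he2 : 2.7182818283 < Real.exp 1 := Real.exp_one_gt_d9
  have hub : x < 0.37 := by nlinarith
  have hlb : 0.36 < x := by nlinarith
  have hx5 : x ^ 5 < 0.37 ^ 5 := by
    apply pow_lt_pow_left₀ hub (le_of_lt hxpos)
    norm_num
  have hx5p : 0 < x ^ 5 := pow_pos hxpos 5
  rw [h5]
  nlinarith [hx5, hx5p, hlb]

/-- **The profile `ρ(t) = e^{−t}` satisfies the six-dimensional flat-top criterion.**
With `r(t) = ρ(t)⁵ = e^{−5t}`: `ρ(1) + ρ'(1) = 0`,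
`∫₀¹ (1−t²)e^{−5t} dt = (23 + 12e^{−5})/125`,
`∫₀¹ t²e^{−5t} dt = (2 − 37e^{−5})/125`,
`e^{−1}(23 + 12e^{−5})/125 > 2((2 − 37e^{−5})/125)²`, and hence with
`h(1) = ∫₀¹ r(t)(1−t²) dt` and `k(1) = ∫₀¹ t² r(t) dt` the flat-top condition
`ρ(1)+ρ'(1) = 0` and the criterion `2k(1)² < h(1)r(1)` both hold. -/
theorem exp_profile_satisfies_dim6_criterion :
    Real.exp (-1) + deriv (fun t : ℝ => Real.exp (-t)) 1 = 0 ∧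
    (∫ t in (0 : ℝ)..1, (1 - t ^ 2) * Real.exp (-5 * t)) = (23 + 12 * Real.exp (-5)) / 125 ∧
    (∫ t in (0 : ℝ)..1, t ^ 2 * Real.exp (-5 * t)) = (2 - 37 * Real.exp (-5)) / 125 ∧
    Real.exp (-1) * ((23 + 12 * Real.exp (-5)) / 125) >
      2 * ((2 - 37 * Real.exp (-5)) / 125) ^ 2 ∧
    Real.exp (-(1 : ℝ)) + deriv (fun t : ℝ => Real.exp (-t)) 1 = 0 ∧
    2 * (∫ t in (0 : ℝ)..1, t ^ 2 * (Real.exp (-t)) ^ 5) ^ 2 <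
      (∫ t in (0 : ℝ)..1, (Real.exp (-t)) ^ 5 * (1 - t ^ 2)) * (Real.exp (-(1 : ℝ))) ^ 5 := by
  have hpow : ∀ t : ℝ, (Real.exp (-t)) ^ 5 = Real.exp (-5 * t) := by
    intro t
    rw [← Real.exp_nat_mul]
    ring_nf
  refine ⟨by rw [deriv_exp_neg]; ring, int1, int2, key_ineq, by rw [deriv_exp_neg]; ring, ?_⟩
  have e1 : (∫ t in (0 : ℝ)..1, t ^ 2 * (Real.exp (-t)) ^ 5)
      = (2 - 37 * Real.exp (-5)) / 125 := by
    rw [← int2]; congr 1; ext t; rw [hpow]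
  have e2 : (∫ t in (0 : ℝ)..1, (Real.exp (-t)) ^ 5 * (1 - t ^ 2))
      = (23 + 12 * Real.exp (-5)) / 125 := by
    rw [← int1]; congr 1; ext t; rw [hpow]; ring
  rw [e1, e2, hpow 1]
  have hy : Real.exp (-5 * 1) = Real.exp (-5) := by norm_num
  rw [hy]
  set y := Real.exp (-5) with hydef
  have hypos : 0 < y := Real.exp_pos _
  have hmul : y * Real.exp 1 ^ 5 = 1 := by
    rw [hydef, ← Real.exp_nat_mul, ← Real.exp_add]; norm_num
  have he1 : Real.exp 1 < 2.7182818286 := Real.exp_one_lt_d9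
  have he2 : 2.7182818283 < Real.exp 1 := Real.exp_one_gt_d9
  have hp1 : Real.exp 1 ^ 5 < 2.72 ^ 5 := by
    apply pow_lt_pow_left₀ (by linarith) (le_of_lt (Real.exp_pos 1))
    norm_num
  have hp2 : (2.71 : ℝ) ^ 5 < Real.exp 1 ^ 5 := by
    apply pow_lt_pow_left₀ (by linarith) (by norm_num)
    norm_num
  have hyub : y < 0.01 := by nlinarith
  have hylb : 0.006 < y := by nlinarith
  nlinarith [hylb, hyub]
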